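/- (First-variation conditions for the heavy top.) Fix m, l, g > 0, I₁, I₃ > 0, ρ ∈ ℝ with ρ ≠ 0 and I₁ ρ ≠ m² l², c ∈ ℝ, Ω₃⁰ ∈ ℝ, a differentiable function Φ : ℝ³ → ℝ, and a differentiable function φ : ℝ → ℝ. On ℝ⁹ with coordinates (Ω, v, Γ) ∈ ℝ³ × ℝ³ × ℝ³, define p = ρ v + m l (Ω × e₃), E⁰ = ½(I₁(Ω₁² + Ω₂²) + I₃ Ω₃²) + m l v·(Ω × e₃) + ½ ρ ‖v‖² + m g l Γ₃, 𝓔 = ½(I₁(Ω₁² + Ω₂²) + I₃ Ω₃²) + m (I₁ ρ/(I₁ ρ − m² l²)) g l Γ₃, and E = E⁰ + c 𝓔 + Φ(‖p‖², p·Γ, ‖Γ‖²) + φ(Ω₃). Then the derivative of E vanishes at the equilibrium (Ω, v, Γ) = (Ω₃⁰ e₃, 0, e₃) if and only if D₂Φ(0,0,1) = 0, D₃Φ(0,0,1) = m g l (m² l² − (1 + c) I₁ ρ)/(2(I₁ ρ − m² l²)), and φ'(Ω₃⁰) = −(1 + c) I₃ Ω₃⁰, where D₂Φ and D₃Φ denote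 the partial derivatives of Φ in its second and third arguments. -/

import Mathlib

open Matrix

/-- The energy–Casimir function `E = E⁰ + c 𝓔 + Φ(‖p‖², p·Γ, ‖Γ‖²) + φ(Ω₃)` for the
Lagrange heavy top on a movable base, on `ℝ⁹` with coordinates `(Ω, v, Γ)`, where
`p = ρv + ml(Ω × e₃)`,
`E⁰ = ½(I₁(Ω₁² + Ω₂²) + I₃Ω₃²) + ml v·(Ω × e₃) + ½ρ‖v‖² + mglΓ₃` and
`𝓔 = ½(I₁(Ω₁² + Ω₂²) + I₃Ω₃²) + m(I₁ρ/(I₁ρ − m²l²))glΓ₃`. -/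
noncomputable def ECfunHT (m l g ρ I₁ I₃ c : ℝ) (Φ : (Fin 3 → ℝ) → ℝ) (φ : ℝ → ℝ)
    (x : (Fin 3 → ℝ) × (Fin 3 → ℝ) × (Fin 3 → ℝ)) : ℝ :=
  let Ω := x.1; let v := x.2.1; let Γ := x.2.2
  let p : Fin 3 → ℝ := ρ • v + (m * l) • (Ω ⨯₃ ![(0 : ℝ), 0, 1])
  (1 / 2) * (I₁ * ((Ω 0) ^ 2 + (Ω 1) ^ 2) + I₃ * (Ω 2) ^ 2)
    + m * l * (v ⬝ᵥ Ω ⨯₃ ![(0 : ℝ), 0, 1]) + (1 / 2) * ρ * (v ⬝ᵥ v) + m * g * l * Γ 2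
    + c * ((1 / 2) * (I₁ * ((Ω 0) ^ 2 + (Ω 1) ^ 2) + I₃ * (Ω 2) ^ 2)
        + m * (I₁ * ρ / (I₁ * ρ - m ^ 2 * l ^ 2)) * g * l * Γ 2)
    + Φ ![p ⬝ᵥ p, p ⬝ᵥ Γ, Γ ⬝ᵥ Γ] + φ (Ω 2)

/-! Along a line `t ↦ x₀ + t y` through the equilibrium `x₀`, each polynomial part of `E` is a
quadratic polynomial in `t`, so its line derivative is read off from the linear coefficient. The
momentum `p` vanishes at `x₀` (as `e₃ × e₃ = 0`), so the Casimir map `(‖p‖², p·Γ, ‖Γ‖²)` has line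
derivative `(0, ρ v₃, 2 Γ₃)` there, and the chain rule handles `Φ` and `φ`. Altogether
`dE(x₀)(Ω, v, Γ) = ((1 + c) I₃ Ω₃⁰ + φ'(Ω₃⁰)) Ω₃ + ρ D₂Φ v₃ + (mgl(1 + cκ) + 2 D₃Φ) Γ₃` with
`κ = I₁ρ/(I₁ρ − m²l²)`, which vanishes iff its three coefficients do. -/

section LineDeriv

variable {𝕜 : Type*} [NontriviallyNormedField 𝕜]
  {E F G : Type*} [NormedAddCommGroup E] [NormedSpace 𝕜 E]
  [NormedAddCommGroup F] [NormedSpace 𝕜 F] [NormedAddCommGroup G] [NormedSpace 𝕜 G]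

theorem hasDerivAt_add_smul_add_smul (k L q : F) :
    HasDerivAt (fun t : 𝕜 => k + t • (L + t • q)) L 0 := by
  have h := ((hasDerivAt_id (0 : 𝕜)).smul
    (((hasDerivAt_id (0 : 𝕜)).smul_const q).const_add L)).const_add k
  simpa using h

theorem hasLineDerivAt_of_eq_add_smul_add_smul {f : E → F} {x v : E} {L q : F}
    (hf : ∀ t : 𝕜, f (x + t • v) = f x + t • (L + t • q)) : HasLineDerivAt 𝕜 f L x v := by
  unfold HasLineDerivAt
  simpa only [hf] using hasDerivAt_add_smul_add_smul (f x) L q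

theorem HasFDerivAt.comp_hasLineDerivAt {f : F → G} {f' : F →L[𝕜] G} {g : E → F} {g' : F}
    {x v : E} (hf : HasFDerivAt f f' (g x)) (hg : HasLineDerivAt 𝕜 g g' x v) :
    HasLineDerivAt 𝕜 (f ∘ g) (f' g') x v := by
  unfold HasLineDerivAt at hg ⊢
  exact HasFDerivAt.comp_hasDerivAt (0 : 𝕜) (by simpa using hf) hg

end LineDeriv

noncomputable section

namespace HeavyTop

/-- Points `(Ω, v, Γ)` of `ℝ⁹`. -/
abbrev State : Type := (Fin 3 → ℝ) × (Fin 3 → ℝ) × (Fin 3 → ℝ)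

def equilibrium (Ω₃0 : ℝ) : State := (Ω₃0 • ![0, 0, 1], 0, ![0, 0, 1])

def rotationalEnergy (I₁ I₃ : ℝ) (Ω : Fin 3 → ℝ) : ℝ :=
  (1 / 2) * (I₁ * ((Ω 0) ^ 2 + (Ω 1) ^ 2) + I₃ * (Ω 2) ^ 2)

/-- The energy `E⁰` of the controlled Lagrangian. -/
def controlledEnergy (m l g ρ I₁ I₃ : ℝ) (x : State) : ℝ :=
  rotationalEnergy I₁ I₃ x.1 + m * l * (x.2.1 ⬝ᵥ x.1 ⨯₃ ![(0 : ℝ), 0, 1])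
    + (1 / 2) * ρ * (x.2.1 ⬝ᵥ x.2.1) + m * g * l * x.2.2 2

/-- The heavy-top energy `𝓔`. -/
def modifiedEnergy (m l g ρ I₁ I₃ : ℝ) (x : State) : ℝ :=
  rotationalEnergy I₁ I₃ x.1 + m * (I₁ * ρ / (I₁ * ρ - m ^ 2 * l ^ 2)) * g * l * x.2.2 2

def momentum (m l ρ : ℝ) (x : State) : Fin 3 → ℝ :=
  ρ • x.2.1 + (m * l) • (x.1 ⨯₃ ![(0 : ℝ), 0, 1])

def casimirs (m l ρ : ℝ) (x : State) : Fin 3 → ℝ :=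
  ![momentum m l ρ x ⬝ᵥ momentum m l ρ x, momentum m l ρ x ⬝ᵥ x.2.2, x.2.2 ⬝ᵥ x.2.2]

variable (m l g ρ I₁ I₃ c Ω₃0 : ℝ) {Φ : (Fin 3 → ℝ) → ℝ} {φ : ℝ → ℝ}

theorem ECfunHT_eq (x : State) :
    ECfunHT m l g ρ I₁ I₃ c Φ φ x = controlledEnergy m l g ρ I₁ I₃ x
      + c * modifiedEnergy m l g ρ I₁ I₃ x + Φ (casimirs m l ρ x) + φ (x.1 2) :=
  rfl

theorem hasLineDerivAt_controlledEnergy (y : State) :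
    HasLineDerivAt ℝ (controlledEnergy m l g ρ I₁ I₃)
      (I₃ * Ω₃0 * y.1 2 + m * g * l * y.2.2 2) (equilibrium Ω₃0) y := by
  obtain ⟨a, b, d⟩ := y
  refine hasLineDerivAt_of_eq_add_smul_add_smul
    (q := rotationalEnergy I₁ I₃ a + m * l * (b ⬝ᵥ a ⨯₃ ![(0 : ℝ), 0, 1])
      + (1 / 2) * ρ * (b ⬝ᵥ b)) fun t => ?_
  simp only [controlledEnergy, rotationalEnergy, equilibrium, cross_apply, dotProduct,
    Fin.sum_univ_three, Prod.smul_mk, Prod.mk_add_mk, Pi.add_apply, Pi.smul_apply, Pi.zero_apply,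
    smul_eq_mul, cons_val_zero, cons_val_one, cons_val_two, vecHead, vecTail, Function.comp_apply,
    Fin.succ_zero_eq_one]
  ring

theorem hasLineDerivAt_modifiedEnergy (y : State) :
    HasLineDerivAt ℝ (modifiedEnergy m l g ρ I₁ I₃)
      (I₃ * Ω₃0 * y.1 2 + m * (I₁ * ρ / (I₁ * ρ - m ^ 2 * l ^ 2)) * g * l * y.2.2 2)
      (equilibrium Ω₃0) y := by
  obtain ⟨a, b, d⟩ := y
  refine hasLineDerivAt_of_eq_add_smul_add_smul (q := rotationalEnergy I₁ I₃ a) fun t => ?_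
  simp only [modifiedEnergy, rotationalEnergy, equilibrium, Prod.smul_mk, Prod.mk_add_mk,
    Pi.add_apply, Pi.smul_apply, smul_eq_mul, cons_val_zero, cons_val_one, cons_val_two,
    tail_cons, head_cons]
  ring

theorem casimirs_equilibrium : casimirs m l ρ (equilibrium Ω₃0) = ![0, 0, 1] := by
  ext i; fin_cases i <;> simp [casimirs, momentum, equilibrium, crossProduct]

theorem hasLineDerivAt_casimirs (y : State) :
    HasLineDerivAt ℝ (casimirs m l ρ) ![0, ρ * y.2.1 2, 2 * y.2.2 2] (equilibrium Ω₃0) y := by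
  obtain ⟨a, b, d⟩ := y
  -- the momentum along the line is `t • q`
  set q := momentum m l ρ (a, b, d)
  refine hasLineDerivAt_of_eq_add_smul_add_smul (q := ![q ⬝ᵥ q, q ⬝ᵥ d, d ⬝ᵥ d]) fun t => ?_
  rw [casimirs_equilibrium]
  simp only [q, casimirs, momentum, equilibrium, cross_apply, dotProduct, Fin.sum_univ_three,
    Prod.smul_mk, Prod.mk_add_mk, Pi.add_apply, Pi.smul_apply, Pi.zero_apply, smul_eq_mul,
    cons_val_zero, cons_val_one, cons_val_two, vecHead, vecTail, Function.comp_apply,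
    Fin.succ_zero_eq_one, Fin.succ_one_eq_two, smul_cons, cons_add, smul_empty, empty_add_empty,
    vecCons_inj, and_true]
  exact ⟨by ring, by ring, by ring⟩

theorem hasLineDerivAt_spin (x y : State) :
    HasLineDerivAt ℝ (fun x : State => x.1 2) (y.1 2) x y :=
  hasLineDerivAt_of_eq_add_smul_add_smul (q := 0) fun t => by simp

theorem differentiable_controlledEnergy : Differentiable ℝ (controlledEnergy m l g ρ I₁ I₃) := by
  unfold controlledEnergy rotationalEnergy
  simp only [cross_apply, dotProduct, Fin.sum_univ_three, cons_val_zero, cons_val_one,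
    cons_val_two, tail_cons, head_cons]
  fun_prop

theorem differentiable_modifiedEnergy : Differentiable ℝ (modifiedEnergy m l g ρ I₁ I₃) := by
  unfold modifiedEnergy rotationalEnergy
  fun_prop

theorem differentiable_casimirs : Differentiable ℝ (casimirs m l ρ) := by
  simp only [differentiable_pi, Fin.forall_fin_succ, IsEmpty.forall_iff, casimirs, momentum,
    cross_apply, dotProduct, Fin.sum_univ_three, Pi.add_apply, Pi.smul_apply, smul_eq_mul,
    cons_val_zero, cons_val_one, cons_val_two, cons_val_succ, head_cons, tail_cons, and_true]
  refine ⟨?_, ?_, ?_⟩ <;> fun_prop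

theorem differentiableAt_ECfunHT {x : State} (hΦ : DifferentiableAt ℝ Φ (casimirs m l ρ x))
    (hφ : DifferentiableAt ℝ φ (x.1 2)) : DifferentiableAt ℝ (ECfunHT m l g ρ I₁ I₃ c Φ φ) x := by
  have hΦ' : DifferentiableAt ℝ (fun x => Φ (casimirs m l ρ x)) x :=
    hΦ.comp x (differentiable_casimirs m l ρ).differentiableAt
  have hφ' : DifferentiableAt ℝ (fun x : State => φ (x.1 2)) x :=
    hφ.comp x (by fun_prop)
  rw [funext (ECfunHT_eq m l g ρ I₁ I₃ c)]
  exact (((differentiable_controlledEnergy m l g ρ I₁ I₃).differentiableAt.add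
    ((differentiable_modifiedEnergy m l g ρ I₁ I₃).differentiableAt.const_mul c)).add hΦ').add hφ'

theorem hasLineDerivAt_ECfunHT (hΦ : DifferentiableAt ℝ Φ ![0, 0, 1])
    (hφ : DifferentiableAt ℝ φ Ω₃0) (y : State) :
    HasLineDerivAt ℝ (ECfunHT m l g ρ I₁ I₃ c Φ φ)
      (((1 + c) * I₃ * Ω₃0 + deriv φ Ω₃0) * y.1 2
        + ρ * fderiv ℝ Φ ![0, 0, 1] (Pi.single 1 1) * y.2.1 2
        + (m * g * l * (1 + c * (I₁ * ρ / (I₁ * ρ - m ^ 2 * l ^ 2)))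
            + 2 * fderiv ℝ Φ ![0, 0, 1] (Pi.single 2 1)) * y.2.2 2)
      (equilibrium Ω₃0) y := by
  have hCasimirs := HasFDerivAt.comp_hasLineDerivAt
    (by rw [casimirs_equilibrium]; exact hΦ.hasFDerivAt) (hasLineDerivAt_casimirs m l ρ Ω₃0 y)
  have hSpin := HasFDerivAt.comp_hasLineDerivAt (x := equilibrium Ω₃0)
    (by simpa [equilibrium] using hφ.hasDerivAt.hasFDerivAt) (hasLineDerivAt_spin _ y)
  have hsplit : ![0, ρ * y.2.1 2, 2 * y.2.2 2]
      = (ρ * y.2.1 2) • Pi.single 1 1 + (2 * y.2.2 2) • Pi.single (M := fun _ => ℝ) 2 1 := by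
    ext i; fin_cases i <;> simp
  have h := ((HasDerivAt.add (hasLineDerivAt_controlledEnergy m l g ρ I₁ I₃ Ω₃0 y)
    ((hasLineDerivAt_modifiedEnergy m l g ρ I₁ I₃ Ω₃0 y).const_mul c)).add hCasimirs).add hSpin
  rw [funext (ECfunHT_eq m l g ρ I₁ I₃ c)]
  refine h.congr_deriv ?_
  simp only [hsplit, map_add, map_smul, smul_eq_mul, ContinuousLinearMap.toSpanSingleton_apply]
  ring

theorem fderiv_ECfunHT_equilibrium_apply (hΦ : DifferentiableAt ℝ Φ ![0, 0, 1])
    (hφ : DifferentiableAt ℝ φ Ω₃0) (y : State) :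
    fderiv ℝ (ECfunHT m l g ρ I₁ I₃ c Φ φ) (equilibrium Ω₃0) y
      = ((1 + c) * I₃ * Ω₃0 + deriv φ Ω₃0) * y.1 2
        + ρ * fderiv ℝ Φ ![0, 0, 1] (Pi.single 1 1) * y.2.1 2
        + (m * g * l * (1 + c * (I₁ * ρ / (I₁ * ρ - m ^ 2 * l ^ 2)))
            + 2 * fderiv ℝ Φ ![0, 0, 1] (Pi.single 2 1)) * y.2.2 2 := by
  have hE : DifferentiableAt ℝ (ECfunHT m l g ρ I₁ I₃ c Φ φ) (equilibrium Ω₃0) :=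
    differentiableAt_ECfunHT m l g ρ I₁ I₃ c (by rwa [casimirs_equilibrium])
      (by simpa [equilibrium] using hφ)
  rw [← hE.lineDeriv_eq_fderiv]
  exact (hasLineDerivAt_ECfunHT m l g ρ I₁ I₃ c Ω₃0 hΦ hφ y).lineDeriv

theorem forall_linear_combination_eq_zero_iff (α β γ : ℝ) :
    (∀ y : State, α * y.1 2 + β * y.2.1 2 + γ * y.2.2 2 = 0) ↔ α = 0 ∧ β = 0 ∧ γ = 0 := by
  refine ⟨fun h => ⟨?_, ?_, ?_⟩, fun ⟨hα, hβ, hγ⟩ y => by simp [hα, hβ, hγ]⟩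
  · simpa using h (Pi.single 2 1, 0, 0)
  · simpa using h (0, Pi.single 2 1, 0)
  · simpa using h (0, 0, Pi.single 2 1)

end HeavyTop

end

theorem heavyTop_first_variation_general (m l g ρ I₁ I₃ c Ω₃0 : ℝ)
    (hρ : ρ ≠ 0) (hρm : I₁ * ρ ≠ m ^ 2 * l ^ 2)
    (Φ : (Fin 3 → ℝ) → ℝ) (hΦ : Differentiable ℝ Φ)
    (φ : ℝ → ℝ) (hφ : Differentiable ℝ φ) :
    fderiv ℝ (ECfunHT m l g ρ I₁ I₃ c Φ φ)
        (Ω₃0 • ![(0 : ℝ), 0, 1], 0, ![(0 : ℝ), 0, 1]) = 0 ↔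
      (fderiv ℝ Φ ![(0 : ℝ), 0, 1] (Pi.single 1 1) = 0 ∧
       fderiv ℝ Φ ![(0 : ℝ), 0, 1] (Pi.single 2 1)
          = m * g * l * (m ^ 2 * l ^ 2 - (1 + c) * (I₁ * ρ)) / (2 * (I₁ * ρ - m ^ 2 * l ^ 2)) ∧
       deriv φ Ω₃0 = -((1 + c) * I₃ * Ω₃0)) := by
  change fderiv ℝ _ (HeavyTop.equilibrium Ω₃0) = 0 ↔ _
  have hΔ : I₁ * ρ - m ^ 2 * l ^ 2 ≠ 0 := sub_ne_zero.mpr hρm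
  have hD₃ : ∀ D : ℝ, m * g * l * (1 + c * (I₁ * ρ / (I₁ * ρ - m ^ 2 * l ^ 2))) + 2 * D = 0 ↔
      D = m * g * l * (m ^ 2 * l ^ 2 - (1 + c) * (I₁ * ρ)) / (2 * (I₁ * ρ - m ^ 2 * l ^ 2)) := by
    intro D
    rw [eq_div_iff (mul_ne_zero two_ne_zero hΔ)]
    field_simp
    constructor <;> intro h <;> linarith
  simp only [ContinuousLinearMap.ext_iff, _root_.zero_apply,
    HeavyTop.fderiv_ECfunHT_equilibrium_apply m l g ρ I₁ I₃ c Ω₃0 (hΦ _) (hφ _),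
    HeavyTop.forall_linear_combination_eq_zero_iff, mul_eq_zero, hρ, false_or]
  rw [hD₃, add_eq_zero_iff_eq_neg']
  tauto

/-- First-variation conditions for the heavy top: the derivative of the
energy–Casimir function vanishes at the upright-spinning equilibrium
`(Ω₃⁰e₃, 0, e₃)` iff `D₂Φ(0,0,1) = 0`,
`D₃Φ(0,0,1) = mgl(m²l² − (1+c)I₁ρ)/(2(I₁ρ − m²l²))` and
`φ'(Ω₃⁰) = −(1+c)I₃Ω₃⁰`. -/
theorem heavyTop_first_variation (m l g ρ I₁ I₃ c Ω₃0 : ℝ)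
    (hm : 0 < m) (hl : 0 < l) (hg : 0 < g) (hI₁ : 0 < I₁) (hI₃ : 0 < I₃)
    (hρ : ρ ≠ 0) (hρm : I₁ * ρ ≠ m ^ 2 * l ^ 2)
    (Φ : (Fin 3 → ℝ) → ℝ) (hΦ : Differentiable ℝ Φ)
    (φ : ℝ → ℝ) (hφ : Differentiable ℝ φ) :
    fderiv ℝ (ECfunHT m l g ρ I₁ I₃ c Φ φ)
        (Ω₃0 • ![(0 : ℝ), 0, 1], 0, ![(0 : ℝ), 0, 1]) = 0 ↔
      (fderiv ℝ Φ ![(0 : ℝ), 0, 1] (Pi.single 1 1) = 0 ∧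
       fderiv ℝ Φ ![(0 : ℝ), 0, 1] (Pi.single 2 1)
          = m * g * l * (m ^ 2 * l ^ 2 - (1 + c) * (I₁ * ρ)) / (2 * (I₁ * ρ - m ^ 2 * l ^ 2)) ∧
       deriv φ Ω₃0 = -((1 + c) * I₃ * Ω₃0)) :=
  heavyTop_first_variation_general m l g ρ I₁ I₃ c Ω₃0 hρ hρm Φ hΦ φ hφ
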